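/- Let P be an n-qubit Pauli string with k-th tensor factor σ_k ∈ {I,X,Y,Z}, and for a Bell-basis outcome B_k let λ_{σ_k}(B_k) be the eigenvalue of σ_k⊗σ_k on the Bell state |B_k⟩. Then for any unit vector |ψ⟩ in (ℂ²)^{⊗n}, the expectation over the Bell measurement outcome distribution p(B) = |⟨B|(|ψ⟩⊗|ψ⟩)|² of the product Λ_P(B) = ∏_{k=1}^n λ_{σ_k}(B_k) equals |⟨ψ|P|ψ⟩|². -/

import Mathlib

/-!
The Bell states are real and diagonalise every `σ ⊗ σ`, with eigenvalues `λ_σ`, so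
`∑_B λ_σ(B) |B⟩⟨B| = σ ⊗ σ`; tensoring over the qubits gives `∑_B Λ_P(B) |B⟩⟨B| = P ⊗ P`.
The expectation is therefore `⟨ψψ| P ⊗ P |ψψ⟩ = ⟨ψ|P|ψ⟩²`, and `⟨ψ|P|ψ⟩` is real because
`P` is Hermitian, so this square is `|⟨ψ|P|ψ⟩|²`.
-/

open scoped Matrix BigOperators

noncomputable section

/-- The four Pauli matrices `I, X, Y, Z` indexed by `Fin 4`. -/
def pauli : Fin 4 → Matrix (Fin 2) (Fin 2) ℂ :=
  ![(1 : Matrix (Fin 2) (Fin 2) ℂ),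
    !![0, 1; 1, 0],
    !![0, -Complex.I; Complex.I, 0],
    !![1, 0; 0, -1]]

/-- The `n`-qubit Pauli string with Pauli matrix `f k` on qubit `k`. -/
def pauliString (n : ℕ) (f : Fin n → Fin 4) :
    Matrix (Fin n → Fin 2) (Fin n → Fin 2) ℂ :=
  Matrix.of fun i j => ∏ k : Fin n, pauli (f k) (i k) (j k)

/-- The four Bell states `Ψ⁺, Ψ⁻, Φ⁺, Φ⁻` indexed by `Fin 4`, as vectors on `ℂ²⊗ℂ²`. -/
def bell : Fin 4 → Fin 2 × Fin 2 → ℂ := fun b p =>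
  (![!![1, 0; 0, 1], !![1, 0; 0, -1], !![0, 1; 1, 0], !![0, 1; -1, 0]] b) p.1 p.2 / Real.sqrt 2

/-- Eigenvalue `λ_σ(B)` of `σ⊗σ` on the Bell state `B`, with `σ` indexed by `Fin 4`
as `I,X,Y,Z` and `B` as `Ψ⁺, Ψ⁻, Φ⁺, Φ⁻`. -/
def lam : Fin 4 → Fin 4 → ℝ := fun σ b =>
  (![![1, 1, 1, 1], ![1, -1, 1, -1], ![-1, 1, 1, -1], ![1, 1, -1, -1]] σ) b

/-- The `2n`-qubit Bell-basis vector `|B⟩ = |B₁⟩⊗⋯⊗|Bₙ⟩`, pairing the `k`-th qubit of the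
first copy with the `k`-th qubit of the second copy. -/
def bellVec (n : ℕ) (b : Fin n → Fin 4) : (Fin n → Fin 2) × (Fin n → Fin 2) → ℂ :=
  fun x => ∏ k : Fin n, bell (b k) (x.1 k, x.2 k)

/-- Tensor (Kronecker) product of two state vectors. -/
def vecKron {α β : Type*} (v : α → ℂ) (w : β → ℂ) : α × β → ℂ :=
  fun p => v p.1 * w p.2

open Matrix Kronecker

section QuadraticForm

variable {𝕜 α : Type*} [RCLike 𝕜] [Fintype α]

lemma star_dotProduct_vecMulVec_star_mulVec (v u : α → 𝕜) :
    star u ⬝ᵥ vecMulVec v (star v) *ᵥ u = ((‖star v ⬝ᵥ u‖ ^ 2 : ℝ) : 𝕜) := by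
  rw [vecMulVec_mulVec, dotProduct_smul, op_smul_eq_mul, star_dotProduct, RCLike.star_def,
    RCLike.conj_mul, RCLike.ofReal_pow]

lemma ofReal_sum_mul_norm_sq_star_dotProduct {ι : Type*} [Fintype ι] (w : ι → ℝ)
    (v : ι → α → 𝕜) (u : α → 𝕜) :
    ((∑ i, w i * ‖star (v i) ⬝ᵥ u‖ ^ 2 : ℝ) : 𝕜)
      = star u ⬝ᵥ (∑ i, (w i : 𝕜) • vecMulVec (v i) (star (v i))) *ᵥ u := by
  rw [sum_mulVec, dotProduct_sum, RCLike.ofReal_sum]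
  refine Finset.sum_congr rfl fun i _ => ?_
  rw [smul_mulVec, dotProduct_smul, star_dotProduct_vecMulVec_star_mulVec, smul_eq_mul,
    RCLike.ofReal_mul]

lemma Matrix.IsHermitian.ofReal_norm_sq_star_dotProduct_mulVec {A : Matrix α α 𝕜}
    (hA : A.IsHermitian) (u : α → 𝕜) :
    ((‖star u ⬝ᵥ A *ᵥ u‖ ^ 2 : ℝ) : 𝕜) = (star u ⬝ᵥ A *ᵥ u) ^ 2 := by
  have hreal := RCLike.conj_eq_iff_im.mpr (hA.im_star_dotProduct_mulVec_self u)
  rw [RCLike.ofReal_pow, ← RCLike.conj_mul, hreal, sq]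

end QuadraticForm

lemma star_vecKron {α β : Type*} (u : α → ℂ) (v : β → ℂ) :
    star (vecKron u v) = vecKron (star u) (star v) := by
  ext p
  exact star_mul' (u p.1) (v p.2)

section Kronecker

variable {α β : Type*} [Fintype α] [Fintype β]

lemma vecKron_dotProduct_vecKron (u u' : α → ℂ) (v v' : β → ℂ) :
    vecKron u v ⬝ᵥ vecKron u' v' = (u ⬝ᵥ u') * (v ⬝ᵥ v') := by
  simp only [dotProduct, Fintype.sum_mul_sum, Fintype.sum_prod_type, vecKron, mul_mul_mul_comm]

lemma kronecker_mulVec_vecKron (A : Matrix α α ℂ) (B : Matrix β β ℂ) (u : α → ℂ) (v : β → ℂ) :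
    (A ⊗ₖ B) *ᵥ vecKron u v = vecKron (A *ᵥ u) (B *ᵥ v) := by
  ext p
  simp only [mulVec, dotProduct, Fintype.sum_mul_sum, Fintype.sum_prod_type, vecKron,
    kroneckerMap_apply, mul_mul_mul_comm]

lemma star_vecKron_dotProduct_kronecker_mulVec (A : Matrix α α ℂ) (B : Matrix β β ℂ)
    (u : α → ℂ) (v : β → ℂ) :
    star (vecKron u v) ⬝ᵥ (A ⊗ₖ B) *ᵥ vecKron u v
      = (star u ⬝ᵥ A *ᵥ u) * (star v ⬝ᵥ B *ᵥ v) := by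
  rw [kronecker_mulVec_vecKron, star_vecKron, vecKron_dotProduct_vecKron]

end Kronecker

lemma pauli_isHermitian (σ : Fin 4) : (pauli σ).IsHermitian := by
  ext i j
  fin_cases σ <;> fin_cases i <;> fin_cases j <;> simp [pauli]

lemma star_bell (c : Fin 4) : star (bell c) = bell c := by
  ext ⟨i, j⟩
  fin_cases c <;> fin_cases i <;> fin_cases j <;> simp [bell, Complex.conj_ofReal]

lemma sum_lam_smul_vecMulVec_bell (σ : Fin 4) :
    ∑ c, (lam σ c : ℂ) • vecMulVec (bell c) (star (bell c)) = pauli σ ⊗ₖ pauli σ := by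
  have hsqrt : ((Real.sqrt 2 : ℝ) : ℂ) ^ 2 = 2 := by
    rw [← Complex.ofReal_pow, Real.sq_sqrt zero_le_two]; norm_num
  ext ⟨x, y⟩ ⟨x', y'⟩
  simp only [star_bell, Matrix.sum_apply, Matrix.smul_apply, vecMulVec_apply, kroneckerMap_apply,
    Fin.sum_univ_four, bell, div_mul_div_comm, ← sq, hsqrt, smul_eq_mul]
  fin_cases σ <;> fin_cases x <;> fin_cases y <;> fin_cases x' <;> fin_cases y' <;>
    norm_num [lam, pauli, Matrix.cons_val_two, Matrix.cons_val_three, Matrix.vecHead, Matrix.vecTail]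

lemma pauliString_isHermitian (n : ℕ) (f : Fin n → Fin 4) : (pauliString n f).IsHermitian := by
  ext i j
  simp only [conjTranspose_apply, pauliString, of_apply, star_prod]
  exact Finset.prod_congr rfl fun k _ => congr_fun₂ (pauli_isHermitian (f k)) (i k) (j k)

lemma sum_prod_lam_smul_vecMulVec_bellVec (n : ℕ) (f : Fin n → Fin 4) :
    ∑ b : Fin n → Fin 4, ((∏ k, lam (f k) (b k) : ℝ) : ℂ) •
        vecMulVec (bellVec n b) (star (bellVec n b))
      = pauliString n f ⊗ₖ pauliString n f := by
  ext p q
  have hsite k := congr_fun₂ (sum_lam_smul_vecMulVec_bell (f k)) (p.1 k, p.2 k) (q.1 k, q.2 k)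
  simp only [Matrix.sum_apply, Matrix.smul_apply, vecMulVec_apply, kroneckerMap_apply,
    smul_eq_mul] at hsite ⊢
  simp only [pauliString, of_apply, bellVec, Pi.star_apply, star_prod, Complex.ofReal_prod,
    ← Finset.prod_mul_distrib, ← hsite]
  rw [Fintype.prod_sum]

theorem bell_sampling_expectation_general (n : ℕ) (f : Fin n → Fin 4)
    (ψ : (Fin n → Fin 2) → ℂ) :
    ∑ b : Fin n → Fin 4,
        (∏ k : Fin n, lam (f k) (b k)) *
          ‖star (bellVec n b) ⬝ᵥ vecKron ψ ψ‖ ^ 2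
      = ‖star ψ ⬝ᵥ (pauliString n f).mulVec ψ‖ ^ 2 := by
  apply RCLike.ofReal_injective (K := ℂ)
  rw [ofReal_sum_mul_norm_sq_star_dotProduct,
    (pauliString_isHermitian n f).ofReal_norm_sq_star_dotProduct_mulVec,
    RCLike.ofReal_eq_complex_ofReal, sum_prod_lam_smul_vecMulVec_bellVec,
    star_vecKron_dotProduct_kronecker_mulVec, sq]

/-- the expectation of `Λ_P(B) = ∏ₖ λ_{σₖ}(Bₖ)` over the Bell measurement
outcome distribution `p(B) = |⟨B|(|ψ⟩⊗|ψ⟩)|²` equals `|⟨ψ|P|ψ⟩|²`. -/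
theorem bell_sampling_expectation (n : ℕ) (f : Fin n → Fin 4)
    (ψ : (Fin n → Fin 2) → ℂ) (hψ : star ψ ⬝ᵥ ψ = 1) :
    ∑ b : Fin n → Fin 4,
        (∏ k : Fin n, lam (f k) (b k)) *
          ‖star (bellVec n b) ⬝ᵥ vecKron ψ ψ‖ ^ 2
      = ‖star ψ ⬝ᵥ (pauliString n f).mulVec ψ‖ ^ 2 :=
  bell_sampling_expectation_general n f ψ

end
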